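/- arXiv:2408.03924 — 2 statements merged into one kernel-verified Lean document; each statement's English description precedes it below -/
import Mathlib

section
/- Parametric derivative of the divided difference of the exponential: for every integer q ≥ 1 and every tuple (x_0, …, x_q) of real numbers, the function τ ↦ e^{-τ[x_0, …, x_q]} is differentiable on ℝ and for every real τ its derivative satisfies (d/dτ) e^{-τ[x_0, …, x_q]} = −x_0 · e^{-τ[x_0, …, x_q]} − e^{-τ[x_1, …, x_q]}. -/
open scoped BigOperators

/-- Complete homogeneous symmetric polynomial of degree `m` in the entries of the list `l`:
`h_m(x_0, …, x_q) = Σ_{k_0+⋯+k_q = m} x_0^{k_0}⋯x_q^{k_q}` (with `h_0 = 1`). -/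
noncomputable def hsymm (l : List ℝ) (m : ℕ) : ℝ :=
  ∑ k ∈ Finset.Nat.antidiagonalTuple l.length m, ∏ i : Fin l.length, l.get i ^ k i

/-- Divided difference of the exponential `e^{t[x_0, …, x_q]}` over the tuple given by the
list `l` (of length `q+1`), defined by its (absolutely convergent) series
`Σ_{m=0}^∞ (t^{q+m}/(q+m)!) · h_m(x_0, …, x_q)`; by convention it is `0` on the empty tuple. -/
noncomputable def dde (t : ℝ) (l : List ℝ) : ℝ :=
  if l.length = 0 then 0
  else ∑' m : ℕ, t ^ (l.length - 1 + m) / (Nat.factorial (l.length - 1 + m)) * hsymm l m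

/-- The sub-tuple `[x_a, …, x_b]` of the sequence `x`, as a list (empty if `b < a`). -/
def seg (x : ℕ → ℝ) (a b : ℕ) : List ℝ :=
  (List.range (b + 1 - a)).map (fun i => x (a + i))

/-!
Write `e^{t[l]} = Σ_k c_k(l) t^k / k!` with `c_k(l) = h_{k+1-|l|}(l)` (and `c_k(l) = 0` for
`k + 1 < |l|`). Differentiating in `t` shifts the coefficients, and the recurrence
`h_{m+1}(a, l) = a h_m(a, l) + h_{m+1}(l)` becomes `c_{k+1}(a :: l) = a c_k(a :: l) + c_k(l)`, i.e.
`(d/dt) e^{t[a, l]} = a e^{t[a, l]} + e^{t[l]}`. The theorem is this identity at `t = -τ`.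
-/

open Finset
open scoped Nat

theorem Finset.Nat.sum_antidiagonalTuple_succ {M : Type*} [AddCommMonoid M] (k n : ℕ)
    (f : (Fin (k + 1) → ℕ) → M) :
    ∑ x ∈ antidiagonalTuple (k + 1) n, f x
      = ∑ p ∈ antidiagonal n, ∑ x ∈ antidiagonalTuple k p.2, f (Fin.cons p.1 x) := by
  have hval : (antidiagonal n).val = List.Nat.antidiagonal n := rfl
  simp only [Finset.sum, antidiagonalTuple, Multiset.Nat.antidiagonalTuple, hval,
    List.Nat.antidiagonalTuple, Multiset.map_coe, Multiset.sum_coe, List.flatMap_def,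
    List.map_flatten, List.sum_flatten, List.map_map, Function.comp_def]

lemma hsymm_zero (l : List ℝ) : hsymm l 0 = 1 := by
  simp [hsymm, Finset.Nat.antidiagonalTuple_zero_right]

lemma hsymm_nil_succ (m : ℕ) : hsymm [] (m + 1) = 0 := by
  simp [hsymm]

lemma hsymm_cons (a : ℝ) (l : List ℝ) (m : ℕ) :
    hsymm (a :: l) m = ∑ p ∈ antidiagonal m, a ^ p.1 * hsymm l p.2 := by
  simp [hsymm, Finset.Nat.sum_antidiagonalTuple_succ, Finset.mul_sum, Fin.prod_univ_succ]

lemma hsymm_cons_succ (a : ℝ) (l : List ℝ) (m : ℕ) :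
    hsymm (a :: l) (m + 1) = a * hsymm (a :: l) m + hsymm l (m + 1) := by
  rw [hsymm_cons, hsymm_cons, Finset.Nat.sum_antidiagonal_succ, Finset.mul_sum]
  simp [pow_succ', mul_assoc, add_comm]

lemma exists_abs_hsymm_le_pow (l : List ℝ) : ∃ K, 1 ≤ K ∧ ∀ m, |hsymm l m| ≤ K ^ m := by
  induction l with
  | nil => exact ⟨1, le_rfl, fun m => by cases m <;> simp [hsymm_zero, hsymm_nil_succ]⟩
  | cons a l ih =>
    obtain ⟨K, hK, hl⟩ := ih
    set L := max K |a|
    have hL : 1 ≤ L := hK.trans (le_max_left _ _)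
    refine ⟨2 * L, by linarith, fun m => ?_⟩
    induction m with
    | zero => simp [hsymm_zero]
    | succ m ihm =>
      have hL_pow : L ^ m ≤ (2 * L) ^ m := pow_le_pow_left₀ (by positivity) (by linarith) m
      calc |hsymm (a :: l) (m + 1)|
          ≤ |a| * |hsymm (a :: l) m| + |hsymm l (m + 1)| := by
            rw [hsymm_cons_succ, ← abs_mul]; exact abs_add_le _ _
        _ ≤ L * (2 * L) ^ m + L ^ (m + 1) := by
            gcongr
            · exact le_max_right _ _
            · exact (hl _).trans (pow_le_pow_left₀ (by linarith) (le_max_left _ _) _)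
        _ ≤ L * (2 * L) ^ m + L * (2 * L) ^ m := by rw [pow_succ']; gcongr
        _ = (2 * L) ^ (m + 1) := by ring

section ExponentialGeneratingFunction

variable {c : ℕ → ℝ} {C K : ℝ}

lemma summable_pow_div_factorial_mul (hc : ∀ k, |c k| ≤ C * K ^ k) (t : ℝ) :
    Summable fun k => t ^ k / k ! * c k := by
  refine Summable.of_norm_bounded ((Real.summable_pow_div_factorial (|t| * K)).mul_left C)
    fun k => ?_
  rw [Real.norm_eq_abs, abs_mul, abs_div, abs_pow, Nat.abs_cast, mul_pow]
  calc |t| ^ k / k ! * |c k| ≤ |t| ^ k / k ! * (C * K ^ k) := by gcongr; exact hc k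
    _ = C * (|t| ^ k * K ^ k / k !) := by ring

lemma hasDerivAt_pow_succ_div_factorial (k : ℕ) (t : ℝ) :
    HasDerivAt (fun t : ℝ => t ^ (k + 1) / (k + 1) !) (t ^ k / k !) t := by
  refine ((hasDerivAt_pow (k + 1) t).div_const _).congr_deriv ?_
  rw [Nat.factorial_succ, Nat.cast_mul]
  field_simp
  push_cast
  ring

theorem hasDerivAt_tsum_pow_div_factorial_mul (hc : ∀ k, |c k| ≤ C * K ^ k) (t : ℝ) :
    HasDerivAt (fun t => ∑' k, t ^ k / k ! * c k) (∑' k, t ^ k / k ! * c (k + 1)) t := by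
  -- after splitting off the constant term, term `k` differentiates to term `k` of the target
  have hshift : (fun s => ∑' k, s ^ k / k ! * c k)
      = fun s => c 0 + ∑' k, s ^ (k + 1) / (k + 1) ! * c (k + 1) := by
    ext s
    rw [(summable_pow_div_factorial_mul hc s).tsum_eq_zero_add]
    simp
  rw [hshift]
  refine HasDerivAt.const_add _ ?_
  set R := |t| + 1
  have ht : t ∈ Metric.ball (0 : ℝ) R := by simp [R]
  have hbound : ∀ k, ∀ y ∈ Metric.ball (0 : ℝ) R,
      ‖y ^ k / k ! * c (k + 1)‖ ≤ C * K * ((R * K) ^ k / k !) := by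
    intro k y hy
    rw [mem_ball_zero_iff, Real.norm_eq_abs] at hy
    rw [Real.norm_eq_abs, abs_mul, abs_div, abs_pow, Nat.abs_cast]
    calc |y| ^ k / k ! * |c (k + 1)| ≤ R ^ k / k ! * (C * K ^ (k + 1)) :=
          mul_le_mul (by gcongr) (hc _) (abs_nonneg _) (by positivity)
      _ = C * K * ((R * K) ^ k / k !) := by rw [mul_pow, pow_succ]; ring
  exact hasDerivAt_tsum_of_isPreconnected
    ((Real.summable_pow_div_factorial (R * K)).mul_left (C * K)) Metric.isOpen_ball
    (convex_ball 0 R).isPreconnected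
    (fun k y _ => (hasDerivAt_pow_succ_div_factorial k y).mul_const (c (k + 1))) hbound
    ht ((summable_pow_div_factorial_mul hc t).comp_injective (add_left_injective 1)) ht

end ExponentialGeneratingFunction

noncomputable def ddeCoeff (l : List ℝ) (k : ℕ) : ℝ :=
  if l.length ≤ k + 1 then hsymm l (k + 1 - l.length) else 0

lemma dde_eq_tsum_ddeCoeff (t : ℝ) (l : List ℝ) :
    dde t l = ∑' k, t ^ k / k ! * ddeCoeff l k := by
  by_cases hlen : l.length = 0
  · simp [List.length_eq_zero_iff.mp hlen, dde, ddeCoeff, hsymm_nil_succ]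
  -- `ddeCoeff l k = 0` for `k + 1 < l.length`, so reindexing by `k = l.length - 1 + m` loses nothing
  rw [dde, if_neg hlen, ← (add_right_injective (l.length - 1)).tsum_eq
    (f := fun k => t ^ k / k ! * ddeCoeff l k)]
  · refine tsum_congr fun m => ?_
    rw [ddeCoeff, if_pos (by omega), show l.length - 1 + m + 1 - l.length = m by omega]
  · intro k hk
    by_contra hrange
    have hk_lt : k + 1 < l.length := by
      by_contra! hle
      exact hrange ⟨k - (l.length - 1), by simp only; omega⟩
    simp [ddeCoeff, if_neg hk_lt.not_ge] at hk

lemma ddeCoeff_cons_succ (a : ℝ) (l : List ℝ) (k : ℕ) :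
    ddeCoeff (a :: l) (k + 1) = a * ddeCoeff (a :: l) k + ddeCoeff l k := by
  simp only [ddeCoeff, List.length_cons]
  rcases lt_trichotomy l.length (k + 1) with hlt | heq | hgt
  · obtain ⟨j, hj⟩ : ∃ j, k + 1 - l.length = j + 1 := ⟨k - l.length, by omega⟩
    rw [if_pos (by omega), if_pos (by omega), if_pos (by omega),
      show k + 1 + 1 - (l.length + 1) = j + 1 by omega,
      show k + 1 - (l.length + 1) = j by omega, hj, hsymm_cons_succ]
  · rw [if_pos (by omega), if_neg (by omega), if_pos (by omega), heq]
    simp [hsymm_zero]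
  · rw [if_neg (by omega), if_neg (by omega), if_neg (by omega)]
    ring

lemma exists_abs_ddeCoeff_le (l : List ℝ) : ∃ K, ∀ k, |ddeCoeff l k| ≤ K * K ^ k := by
  obtain ⟨K, hK, hbound⟩ := exists_abs_hsymm_le_pow l
  refine ⟨K, fun k => ?_⟩
  rw [ddeCoeff]
  split_ifs
  · calc |hsymm l (k + 1 - l.length)| ≤ K ^ (k + 1 - l.length) := hbound _
      _ ≤ K ^ (k + 1) := pow_le_pow_right₀ hK (Nat.sub_le _ _)
      _ = K * K ^ k := pow_succ' K k
  · simp only [abs_zero]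
    positivity

theorem hasDerivAt_dde_cons (a : ℝ) (l : List ℝ) (t : ℝ) :
    HasDerivAt (fun t => dde t (a :: l)) (a * dde t (a :: l) + dde t l) t := by
  obtain ⟨K, hK⟩ := exists_abs_ddeCoeff_le (a :: l)
  obtain ⟨K', hK'⟩ := exists_abs_ddeCoeff_le l
  simp only [dde_eq_tsum_ddeCoeff]
  convert hasDerivAt_tsum_pow_div_factorial_mul hK t using 1
  simp only [ddeCoeff_cons_succ, mul_add, mul_left_comm _ a]
  rw [Summable.tsum_add ((summable_pow_div_factorial_mul hK t).mul_left a)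
    (summable_pow_div_factorial_mul hK' t), tsum_mul_left]

lemma seg_zero_eq_cons (x : ℕ → ℝ) (q : ℕ) : seg x 0 q = x 0 :: seg x 1 q := by
  simp [seg, List.range_succ_eq_map, Nat.add_comm]

theorem dde_parametric_derivative_general (q : ℕ) (x : ℕ → ℝ) :
    Differentiable ℝ (fun τ : ℝ => dde (-τ) (seg x 0 q))
      ∧ ∀ τ : ℝ, deriv (fun τ : ℝ => dde (-τ) (seg x 0 q)) τ
          = -(x 0) * dde (-τ) (seg x 0 q) - dde (-τ) (seg x 1 q) := by
  have hderiv : ∀ τ, HasDerivAt (fun τ : ℝ => dde (-τ) (seg x 0 q))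
      (-(x 0) * dde (-τ) (seg x 0 q) - dde (-τ) (seg x 1 q)) τ := by
    intro τ
    rw [seg_zero_eq_cons]
    exact ((hasDerivAt_dde_cons (x 0) (seg x 1 q) (-τ)).comp τ (hasDerivAt_neg τ)).congr_deriv
      (by ring)
  exact ⟨fun τ => (hderiv τ).differentiableAt, fun τ => (hderiv τ).deriv⟩

/-- **Parametric derivative**: for `q ≥ 1` and any tuple `(x_0, …, x_q)`, the map
`τ ↦ e^{-τ[x_0,…,x_q]}` is differentiable on `ℝ` with
`(d/dτ) e^{-τ[x_0,…,x_q]} = −x_0 e^{-τ[x_0,…,x_q]} − e^{-τ[x_1,…,x_q]}`. -/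
theorem dde_parametric_derivative (q : ℕ) (hq : 1 ≤ q) (x : ℕ → ℝ) :
    Differentiable ℝ (fun τ : ℝ => dde (-τ) (seg x 0 q))
      ∧ ∀ τ : ℝ, deriv (fun τ : ℝ => dde (-τ) (seg x 0 q)) τ
          = -(x 0) * dde (-τ) (seg x 0 q) - dde (-τ) (seg x 1 q) :=
  dde_parametric_derivative_general q x
end

section
/- Repeated-argument sum simplification: for every integer q ≥ 0, every tuple (x_0, …, x_q) of real numbers and every real τ, one has Σ_{j=0}^{q} e^{-τ[x_0, …, x_q, x_j]} = −τ · e^{-τ[x_0, …, x_q]}, where [x_0, …, x_q, x_j] denotes the tuple (x_0, …, x_q) with x_j appended. -/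
open scoped BigOperators

/-!
Appending a copy of `x_j` to `x = (x_0, …, x_q)`, a monomial `x^k` of `h_m(x)` arises from
exactly `k_j + 1` multi-indices of `h_m(x, x_j)`, one for each value of the exponent of the
appended variable. Hence `Σ_j h_m(x, x_j) = Σ_k (Σ_j (k_j + 1)) x^k = (q + 1 + m) h_m(x)`, and the
factor `q + 1 + m` cancels against `(q + 1 + m)!` in the series of `e^{t[x, x_j]}`, leaving `t`
times the series of `e^{t[x]}`. The bound `|h_m(x)| ≤ (m + 1)^(q+1) ‖x‖^m` makes the series
summable, so the finite sum over `j` may be taken termwise.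
-/

open Finset
open scoped Nat

section CompleteHomogeneous

variable {R : Type*} [CommSemiring R] {n : ℕ}

noncomputable def completeHomogeneous (m : ℕ) (f : Fin n → R) : R :=
  ∑ k ∈ Nat.antidiagonalTuple n m, ∏ i, f i ^ k i

theorem completeHomogeneous_snoc_self (m : ℕ) (f : Fin n → R) (j : Fin n) :
    completeHomogeneous m (Fin.snoc f (f j) : Fin (n + 1) → R) =
      ∑ k ∈ Nat.antidiagonalTuple n m, ((k j : R) + 1) * ∏ i, f i ^ k i := by
  have hmul (k : Fin n → ℕ) :
      ((k j : R) + 1) * ∏ i, f i ^ k i = ∑ _c ∈ range (k j + 1), ∏ i, f i ^ k i := by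
    rw [sum_const, card_range, nsmul_eq_mul]; push_cast; ring
  have single_le {p : Fin n → ℕ} {c : ℕ} (hc : c < p j + 1) : Pi.single j c ≤ p := by
    intro i
    rcases eq_or_ne i j with rfl | hi
    · simpa [Nat.lt_succ_iff] using hc
    · simp [hi]
  simp_rw [completeHomogeneous, hmul]
  rw [sum_sigma']
  refine sum_nbij' (fun k => ⟨Fin.init k + Pi.single j (k (Fin.last n)), k (Fin.last n)⟩)
    (fun p => Fin.snoc (p.1 - Pi.single j p.2) p.2) ?_ ?_ ?_ ?_ ?_
  · intro k hk
    simp only [mem_sigma, Nat.mem_antidiagonalTuple, mem_range] at hk ⊢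
    rw [Fin.sum_univ_castSucc] at hk
    simp [sum_add_distrib, Fin.init, hk]
  · intro p hp
    simp only [mem_sigma, Nat.mem_antidiagonalTuple, mem_range] at hp ⊢
    rw [Fin.sum_univ_castSucc]
    simp only [Fin.snoc_castSucc, Fin.snoc_last, Pi.sub_apply]
    rw [sum_tsub_distrib _ fun i _ => single_le hp.2 i]
    have := single_le_sum (fun i _ => Nat.zero_le (p.1 i)) (mem_univ j)
    simp only [hp.1, sum_pi_single', mem_univ, if_true]
    omega
  · intro k _
    simp [Fin.snoc_init_self]
  · intro p hp
    simp only [mem_sigma, Nat.mem_antidiagonalTuple, mem_range] at hp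
    simp [Fin.init_snoc, tsub_add_cancel_of_le (single_le hp.2)]
  · intro k _
    rw [Fin.prod_univ_castSucc]
    simp only [Fin.snoc_castSucc, Fin.snoc_last, Fin.init, Pi.add_apply, pow_add,
      prod_mul_distrib, Pi.single_apply, pow_ite, pow_zero, prod_ite_eq', mem_univ, if_true]

theorem sum_completeHomogeneous_snoc_self (m : ℕ) (f : Fin n → R) :
    ∑ j, completeHomogeneous m (Fin.snoc f (f j) : Fin (n + 1) → R) =
      (n + m) * completeHomogeneous m f := by
  simp_rw [completeHomogeneous_snoc_self, completeHomogeneous]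
  rw [sum_comm, mul_sum]
  refine sum_congr rfl fun k hk => ?_
  rw [← sum_mul, sum_add_distrib, ← Nat.cast_sum, Nat.mem_antidiagonalTuple.mp hk]
  simp [add_comm]

end CompleteHomogeneous

theorem card_antidiagonalTuple_le (n m : ℕ) : #(Nat.antidiagonalTuple n m) ≤ (m + 1) ^ n :=
  calc #(Nat.antidiagonalTuple n m) ≤ #(Fintype.piFinset fun _ : Fin n => range (m + 1)) :=
        card_le_card fun k hk => Fintype.mem_piFinset.mpr fun i => mem_range_succ_iff.mpr <|
          (single_le_sum (fun i _ => Nat.zero_le (k i)) (mem_univ i)).trans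
            (Nat.mem_antidiagonalTuple.mp hk).le
    _ = (m + 1) ^ n := by simp

section Real

variable {n : ℕ}

theorem abs_completeHomogeneous_le (m : ℕ) (f : Fin n → ℝ) :
    |completeHomogeneous m f| ≤ (m + 1) ^ n * ‖f‖ ^ m := by
  have hterm : ∀ k ∈ Nat.antidiagonalTuple n m, |∏ i, f i ^ k i| ≤ ‖f‖ ^ m := fun k hk =>
    calc |∏ i, f i ^ k i| = ∏ i, ‖f i‖ ^ k i := by simp [abs_prod]
      _ ≤ ∏ i, ‖f‖ ^ k i := by gcongr with i; exact norm_le_pi_norm f i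
      _ = ‖f‖ ^ m := by rw [prod_pow_eq_pow_sum, Nat.mem_antidiagonalTuple.mp hk]
  calc |completeHomogeneous m f| ≤ ∑ _k ∈ Nat.antidiagonalTuple n m, ‖f‖ ^ m :=
        (abs_sum_le_sum_abs _ _).trans (sum_le_sum hterm)
    _ = #(Nat.antidiagonalTuple n m) * ‖f‖ ^ m := by rw [sum_const, nsmul_eq_mul]
    _ ≤ (m + 1) ^ n * ‖f‖ ^ m := by gcongr; exact_mod_cast card_antidiagonalTuple_le n m

theorem summable_pow_div_factorial_mul_completeHomogeneous (t : ℝ) (N : ℕ) (f : Fin n → ℝ) :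
    Summable fun m => t ^ (N + m) / (N + m)! * completeHomogeneous m f := by
  refine Summable.of_norm_bounded
    ((Real.summable_pow_div_factorial (2 ^ n * ‖f‖ * |t|)).mul_left (|t| ^ N)) fun m => ?_
  calc ‖t ^ (N + m) / (N + m)! * completeHomogeneous m f‖
      = |t| ^ N * |t| ^ m / (N + m)! * |completeHomogeneous m f| := by
        rw [Real.norm_eq_abs, abs_mul, abs_div, abs_pow, pow_add, Nat.abs_cast]
    _ ≤ |t| ^ N * |t| ^ m / m ! * ((2 ^ m) ^ n * ‖f‖ ^ m) := by
        gcongr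
        · exact Nat.le_add_left m N
        · refine (abs_completeHomogeneous_le m f).trans ?_
          gcongr
          exact_mod_cast Nat.lt_two_pow_self
    _ = |t| ^ N * ((2 ^ n * ‖f‖ * |t|) ^ m / m !) := by ring

end Real

theorem hsymm_eq_completeHomogeneous (l : List ℝ) (m : ℕ) :
    hsymm l m = completeHomogeneous m l.get := rfl

theorem hsymm_append_singleton (l : List ℝ) (a : ℝ) (m : ℕ) :
    hsymm (l ++ [a]) m = completeHomogeneous m (Fin.snoc l.get a : Fin (l.length + 1) → ℝ) := by
  have key {n : ℕ} (h : (l ++ [a]).length = n) : hsymm (l ++ [a]) m =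
      completeHomogeneous m fun i : Fin n => (l ++ [a]).get (i.cast h.symm) := by
    subst h; rfl
  rw [key (n := l.length + 1) (by simp)]
  congr 1
  funext i
  simp [Fin.snoc, List.getElem_append]

theorem dde_eq_tsum {l : List ℝ} {N : ℕ} (h : l.length = N + 1) (t : ℝ) :
    dde t l = ∑' m, t ^ (N + m) / (N + m)! * hsymm l m := by
  simp [dde, h]

theorem sum_dde_append_get (t : ℝ) (l : List ℝ) :
    ∑ j : Fin l.length, dde t (l ++ [l.get j]) = t * dde t l := by
  obtain rfl | ⟨N, hN⟩ : l = [] ∨ ∃ N, l.length = N + 1 := by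
    cases l <;> simp
  · simp [dde]
  have hterm (m : ℕ) :
      ∑ j : Fin l.length, t ^ (N + 1 + m) / (N + 1 + m)! * hsymm (l ++ [l.get j]) m = t * (t ^ (N + m) / (N + m)! * hsymm l m) := by
    simp_rw [← mul_sum, hsymm_append_singleton, sum_completeHomogeneous_snoc_self, hN]
    rw [show N + 1 + m = N + m + 1 by omega, Nat.factorial_succ, pow_succ]
    push_cast
    rw [hsymm_eq_completeHomogeneous]
    field_simp
    ring
  simp_rw [dde_eq_tsum (l := l ++ [_]) (N := N + 1) (by simp [hN])]
  have hsum (a : ℝ) : Summable fun m => t ^ (N + 1 + m) / (N + 1 + m)! * hsymm (l ++ [a]) m :=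
    summable_pow_div_factorial_mul_completeHomogeneous t (N + 1) (l ++ [a]).get
  rw [← Summable.tsum_finsetSum fun j _ => hsum _, tsum_congr hterm, tsum_mul_left, dde_eq_tsum hN]

/-- **Repeated-argument sum simplification** (Proposition 3): for every `q ≥ 0`, tuple
`(x_0, …, x_q)` and real `τ`, `Σ_{j=0}^{q} e^{-τ[x_0,…,x_q,x_j]} = −τ e^{-τ[x_0,…,x_q]}`. -/
theorem repeatedarg_sum (q : ℕ) (x : ℕ → ℝ) (τ : ℝ) :
    ∑ j ∈ Finset.range (q + 1), dde (-τ) (seg x 0 q ++ [x j])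
      = -τ * dde (-τ) (seg x 0 q) := by
  have hlen : (seg x 0 q).length = q + 1 := by simp [seg]
  have hget (j : Fin (seg x 0 q).length) : (seg x 0 q).get j = x j := by
    rw [List.get_eq_getElem]; simp [seg]
  rw [← sum_dde_append_get, ← hlen, ← Fin.sum_univ_eq_sum_range]
  simp_rw [hget]
end
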